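/- Let F be a field and let a₀, a₁, a₂, c, f₀, f₁, f₂ be nonzero elements of F. Let S₀ be the map (a₀,a₁,a₂,c,f₀,f₁,f₂) ↦ (a₀^{-1}, a₀a₁, a₀a₂, c, f₀, f₁(a₀+f₀)/(1+a₀f₀), f₂(1+a₀f₀)/(a₀+f₀)) and let W₀ be the map fixing a₀,a₁,a₂, sending c ↦ c^{-1} and f_i ↦ a_i a_{i+1}(a_{i-1}a_i + a_{i-1}f_i + f_{i-1}f_i)/(f_{i-1}(a_i a_{i+1} + a_i f_{i+1} + f_i f_{i+1})) (indices mod 3). Then, whenever all intermediate denominators are nonzero, S₀ ∘ W₀ = W₀ ∘ S₀ on such tuples. (This expresses the commutativity of the actions of W̃(A₂^{(1)}) and W̃(A₁^{(1)}) in the birational representation of W̃((A₂+A₁)^{(1)}).) -/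

import Mathlib

/-- The birational action of the generator `s₀` of `W̃((A₂+A₁)⁽¹⁾)` on
`(a₀, a₁, a₂, c, f₀, f₁, f₂)`. -/
def weylS0 {F : Type*} [Field F] :
    F × F × F × F × F × F × F → F × F × F × F × F × F × F
  | (a0, a1, a2, c, f0, f1, f2) =>
    (a0⁻¹, a0 * a1, a0 * a2, c, f0,
      f1 * (a0 + f0) / (1 + a0 * f0),
      f2 * (1 + a0 * f0) / (a0 + f0))

/-- The birational action of the generator `w₀` of `W̃((A₂+A₁)⁽¹⁾)` on
`(a₀, a₁, a₂, c, f₀, f₁, f₂)`. -/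
def weylW0 {F : Type*} [Field F] :
    F × F × F × F × F × F × F → F × F × F × F × F × F × F
  | (a0, a1, a2, c, f0, f1, f2) =>
    (a0, a1, a2, c⁻¹,
      a0 * a1 * (a2 * a0 + a2 * f0 + f2 * f0) / (f2 * (a0 * a1 + a0 * f1 + f0 * f1)),
      a1 * a2 * (a0 * a1 + a0 * f1 + f0 * f1) / (f0 * (a1 * a2 + a1 * f2 + f1 * f2)),
      a2 * a0 * (a1 * a2 + a1 * f2 + f1 * f2) / (f1 * (a2 * a0 + a2 * f0 + f2 * f0)))

/-- Nonvanishing of the denominators appearing in `s₀`. -/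
def denS0 {F : Type*} [Field F] (x : F × F × F × F × F × F × F) : Prop :=
  match x with
  | (a0, _, _, _, f0, _, _) => 1 + a0 * f0 ≠ 0 ∧ a0 + f0 ≠ 0

/-- Nonvanishing of the denominators appearing in `w₀`. -/
def denW0 {F : Type*} [Field F] (x : F × F × F × F × F × F × F) : Prop :=
  match x with
  | (a0, a1, a2, _, f0, f1, f2) =>
    f2 * (a0 * a1 + a0 * f1 + f0 * f1) ≠ 0 ∧
    f0 * (a1 * a2 + a1 * f2 + f1 * f2) ≠ 0 ∧
    f1 * (a2 * a0 + a2 * f0 + f2 * f0) ≠ 0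

/-! Write `X = weylQ a₀ a₁ f₀ f₁`, `Y = weylQ a₁ a₂ f₁ f₂`, `Z = weylQ a₂ a₀ f₂ f₀` for the
quadratic factors of `w₀`.
Under `s₀` they become `X / a₀`, `(f₂ X + a₀² a₁ Z) / (a₀ + f₀)` and `(1 + a₀ f₀) Z / (a₀ + f₀)`,
while the `f₀`-coordinate of `w₀` fed into `s₀` factors through the identity
`f₂ X + a₁ Z = (a₀ + f₀) Y`. After these substitutions both composites are the same rational
expression in `a, f, X, Y, Z`. -/

section

variable {F : Type*} [Field F]

def weylQ (a b f g : F) : F := a * b + a * g + f * g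

def weylS0W0 : F × F × F × F × F × F × F → F × F × F × F × F × F × F
  | (a0, a1, a2, c, f0, f1, f2) =>
    (a0⁻¹, a0 * a1, a0 * a2, c⁻¹,
      a0 * a1 * weylQ a2 a0 f2 f0 / (f2 * weylQ a0 a1 f0 f1),
      a0 * a1 * a2 * (a0 + f0) * weylQ a0 a1 f0 f1 /
        (f0 * (f2 * weylQ a0 a1 f0 f1 + a0 ^ 2 * a1 * weylQ a2 a0 f2 f0)),
      a2 * (f2 * weylQ a0 a1 f0 f1 + a0 ^ 2 * a1 * weylQ a2 a0 f2 f0) /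
        ((a0 + f0) * f1 * weylQ a2 a0 f2 f0))

variable (a0 a1 a2 c f0 f1 f2 : F)

lemma weylW0_apply : weylW0 (a0, a1, a2, c, f0, f1, f2) =
    (a0, a1, a2, c⁻¹,
      a0 * a1 * weylQ a2 a0 f2 f0 / (f2 * weylQ a0 a1 f0 f1),
      a1 * a2 * weylQ a0 a1 f0 f1 / (f0 * weylQ a1 a2 f1 f2),
      a2 * a0 * weylQ a1 a2 f1 f2 / (f1 * weylQ a2 a0 f2 f0)) := rfl

lemma weylQ_cycle :
    f2 * weylQ a0 a1 f0 f1 + a1 * weylQ a2 a0 f2 f0 = (a0 + f0) * weylQ a1 a2 f1 f2 := by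
  unfold weylQ; ring

variable {a0 a1 a2 c f0 f1 f2}

lemma weylS0_weylW0_eq (ha0 : a0 ≠ 0) (hf0 : f0 ≠ 0) (hf2 : f2 ≠ 0)
    (hX : weylQ a0 a1 f0 f1 ≠ 0) (hY : weylQ a1 a2 f1 f2 ≠ 0) :
    weylS0 (weylW0 (a0, a1, a2, c, f0, f1, f2)) = weylS0W0 (a0, a1, a2, c, f0, f1, f2) := by
  have h_one_add : 1 + a0 * (a0 * a1 * weylQ a2 a0 f2 f0 / (f2 * weylQ a0 a1 f0 f1)) =
      (f2 * weylQ a0 a1 f0 f1 + a0 ^ 2 * a1 * weylQ a2 a0 f2 f0) / (f2 * weylQ a0 a1 f0 f1) := by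
    field_simp
  have h_add : a0 + a0 * a1 * weylQ a2 a0 f2 f0 / (f2 * weylQ a0 a1 f0 f1) =
      a0 * ((a0 + f0) * weylQ a1 a2 f1 f2) / (f2 * weylQ a0 a1 f0 f1) := by
    rw [← weylQ_cycle]; field_simp
  simp only [weylW0_apply, weylS0, weylS0W0, h_one_add, h_add, Prod.mk.injEq, true_and]
  constructor <;> field_simp

lemma weylQ_weylS0_01 (ha0 : a0 ≠ 0) (hA : 1 + a0 * f0 ≠ 0) :
    weylQ a0⁻¹ (a0 * a1) f0 (f1 * (a0 + f0) / (1 + a0 * f0)) = weylQ a0 a1 f0 f1 / a0 := by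
  unfold weylQ; field_simp; ring

lemma weylQ_weylS0_12 (hA : 1 + a0 * f0 ≠ 0) (hB : a0 + f0 ≠ 0) :
    weylQ (a0 * a1) (a0 * a2) (f1 * (a0 + f0) / (1 + a0 * f0)) (f2 * (1 + a0 * f0) / (a0 + f0)) =
      (f2 * weylQ a0 a1 f0 f1 + a0 ^ 2 * a1 * weylQ a2 a0 f2 f0) / (a0 + f0) := by
  unfold weylQ; field_simp; ring

lemma weylQ_weylS0_20 (ha0 : a0 ≠ 0) (hB : a0 + f0 ≠ 0) :
    weylQ (a0 * a2) a0⁻¹ (f2 * (1 + a0 * f0) / (a0 + f0)) f0 =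
      (1 + a0 * f0) * weylQ a2 a0 f2 f0 / (a0 + f0) := by
  unfold weylQ; field_simp

lemma weylW0_weylS0_eq (ha0 : a0 ≠ 0) (hA : 1 + a0 * f0 ≠ 0) (hB : a0 + f0 ≠ 0) :
    weylW0 (weylS0 (a0, a1, a2, c, f0, f1, f2)) = weylS0W0 (a0, a1, a2, c, f0, f1, f2) := by
  simp only [weylS0, weylW0_apply, weylS0W0, weylQ_weylS0_01 ha0 hA, weylQ_weylS0_12 hA hB,
    weylQ_weylS0_20 ha0 hB, Prod.mk.injEq, true_and]
  refine ⟨?_, ?_, ?_⟩ <;> field_simp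

end

theorem weylS0_weylW0_comm_general
    (F : Type*) [Field F] (a0 a1 a2 c f0 f1 f2 : F)
    (ha0 : a0 ≠ 0)
    (h1 : denS0 (a0, a1, a2, c, f0, f1, f2))
    (h2 : denW0 (a0, a1, a2, c, f0, f1, f2)) :
    weylS0 (weylW0 (a0, a1, a2, c, f0, f1, f2)) =
      weylW0 (weylS0 (a0, a1, a2, c, f0, f1, f2)) := by
  obtain ⟨hA, hB⟩ := h1
  obtain ⟨hf2X, hf0Y, -⟩ := h2
  obtain ⟨hf2, hX⟩ := mul_ne_zero_iff.mp hf2X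
  obtain ⟨hf0, hY⟩ := mul_ne_zero_iff.mp hf0Y
  rw [weylS0_weylW0_eq ha0 hf0 hf2 hX hY, weylW0_weylS0_eq ha0 hA hB]

/-- `s₀ ∘ w₀ = w₀ ∘ s₀`, expressing the commutativity of the
actions of `W̃(A₂⁽¹⁾)` and `W̃(A₁⁽¹⁾)` in the birational representation of
`W̃((A₂+A₁)⁽¹⁾)`. -/
theorem weylS0_weylW0_comm
    (F : Type*) [Field F] (a0 a1 a2 c f0 f1 f2 : F)
    (ha0 : a0 ≠ 0) (ha1 : a1 ≠ 0) (ha2 : a2 ≠ 0) (hc : c ≠ 0)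
    (hf0 : f0 ≠ 0) (hf1 : f1 ≠ 0) (hf2 : f2 ≠ 0)
    (h1 : denS0 (a0, a1, a2, c, f0, f1, f2))
    (h2 : denW0 (a0, a1, a2, c, f0, f1, f2))
    (h3 : denS0 (weylW0 (a0, a1, a2, c, f0, f1, f2)))
    (h4 : denW0 (weylS0 (a0, a1, a2, c, f0, f1, f2))) :
    weylS0 (weylW0 (a0, a1, a2, c, f0, f1, f2)) =
      weylW0 (weylS0 (a0, a1, a2, c, f0, f1, f2)) :=
  weylS0_weylW0_comm_general F a0 a1 a2 c f0 f1 f2 ha0 h1 h2
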